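/- Under assumptions (A1)–(A3), every bounded sequence belongs to 𝕏↑: ℓ^∞(ℕ) ⊆ { x ∈ ℝ^ℕ : Σ_{ν,j} γ_j α_{ν,1}^{-1} h_ν(x_j)² < ∞ }. Moreover the inclusion is strict. -/

import Mathlib

open Polynomial Filter
set_option maxHeartbeats 1000000

noncomputable def He (n : ℕ) (x : ℝ) : ℝ := Polynomial.aeval x (Polynomial.hermite n)

lemma derivative_hermite_succ (n : ℕ) :
    derivative (hermite (n + 1)) = ((n : Polynomial ℤ) + 1) * hermite n := by
  induction n with
  | zero => simp [hermite_one, hermite_zero]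
  | succ n ih =>
    have h2 : derivative (hermite (n + 1 + 1)) =
        hermite (n + 1) + X * derivative (hermite (n + 1))
          - derivative (derivative (hermite (n + 1))) := by
      rw [hermite_succ (n + 1), derivative_sub, derivative_mul, derivative_X, one_mul]
    rw [h2, ih, derivative_mul, hermite_succ n]
    simp only [derivative_add, derivative_natCast, derivative_one, Nat.cast_add, Nat.cast_one]
    push_cast
    ring

lemma He_zero (x : ℝ) : He 0 x = 1 := by simp [He, hermite_zero]

lemma He_one (x : ℝ) : He 1 x = x := by simp [He, hermite_one]

lemma He_succ (n : ℕ) (x : ℝ) :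
    He (n + 1) x = x * He n x - Polynomial.aeval x (derivative (hermite n)) := by
  simp [He, hermite_succ]

lemma hasDerivAt_He (n : ℕ) (x : ℝ) :
    HasDerivAt (He n) (x * He n x - He (n + 1) x) x := by
  have h := Polynomial.hasDerivAt_aeval (q := hermite n) x
  have he : Polynomial.aeval x (derivative (hermite n)) = x * He n x - He (n + 1) x := by
    rw [He_succ]; ring
  rw [he] at h
  exact h

lemma hasDerivAt_He_succ (n : ℕ) (x : ℝ) :
    HasDerivAt (He (n + 1)) (((n : ℝ) + 1) * He n x) x := by
  have h := Polynomial.hasDerivAt_aeval (q := hermite (n + 1)) x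
  rw [derivative_hermite_succ] at h
  have hv : Polynomial.aeval x (((n : Polynomial ℤ) + 1) * hermite n) = ((n:ℝ) + 1) * He n x := by
    simp [He]
  rw [hv] at h
  exact h

noncomputable def W (n : ℕ) (x : ℝ) : ℝ :=
  Real.exp (-x ^ 2) * (He (n + 1) x ^ 2 / (n + 1).factorial + He n x ^ 2 / n.factorial)

lemma hasDerivAt_W (n : ℕ) (x : ℝ) :
    HasDerivAt (W n) (-(2 * x) * (Real.exp (-x ^ 2) * (He (n + 1) x ^ 2 / (n + 1).factorial))) x := by
  have ha := hasDerivAt_He_succ n x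
  have hb := hasDerivAt_He n x
  have hexp : HasDerivAt (fun x : ℝ => Real.exp (-x ^ 2)) (-(2 * x) * Real.exp (-x ^ 2)) x := by
    have h1 : HasDerivAt (fun x : ℝ => -x ^ 2) (-(2 * x)) x := by
      simpa using (hasDerivAt_pow 2 x).fun_neg
    simpa [mul_comm] using h1.exp
  have hinner : HasDerivAt
      (fun x => He (n + 1) x ^ 2 / (n + 1).factorial + He n x ^ 2 / n.factorial)
      ((2 * He (n + 1) x ^ 1 * (((n : ℝ) + 1) * He n x)) / (n + 1).factorial
        + (2 * He n x ^ 1 * (x * He n x - He (n + 1) x)) / n.factorial) x :=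
    ((ha.pow 2).div_const _).add ((hb.pow 2).div_const _)
  have hW := hexp.mul hinner
  have hfac : (((n + 1).factorial : ℝ)) = ((n : ℝ) + 1) * n.factorial := by
    push_cast [Nat.factorial_succ]; ring
  have hne : ((n.factorial : ℝ)) ≠ 0 := by positivity
  have hne1 : ((n : ℝ) + 1) ≠ 0 := by positivity
  refine hW.congr_deriv ?_
  rw [hfac]
  field_simp
  ring

lemma W_le_W_zero (n : ℕ) (x : ℝ) : W n x ≤ W n 0 := by
  have hdiff : ∀ y : ℝ, HasDerivAt (W n)
      (-(2 * y) * (Real.exp (-y ^ 2) * (He (n + 1) y ^ 2 / (n + 1).factorial))) y :=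
    hasDerivAt_W n
  have hderiv : ∀ y : ℝ, deriv (W n) y
      = -(2 * y) * (Real.exp (-y ^ 2) * (He (n + 1) y ^ 2 / (n + 1).factorial)) :=
    fun y => (hdiff y).deriv
  have hdiffable : Differentiable ℝ (W n) := fun y => (hdiff y).differentiableAt
  have hfacpos : (0:ℝ) < (n + 1).factorial := by positivity
  rcases le_total 0 x with hx | hx
  · have hanti : AntitoneOn (W n) (Set.Ici 0) := by
      apply antitoneOn_of_deriv_nonpos (convex_Ici 0) hdiffable.continuous.continuousOn
        hdiffable.differentiableOn
      intro y hy
      rw [interior_Ici] at hy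
      rw [hderiv y]
      have h1 : (0:ℝ) ≤ 2 * y := by nlinarith [Set.mem_Ioi.mp hy]
      have h2 : (0:ℝ) ≤ Real.exp (-y ^ 2) * (He (n + 1) y ^ 2 / (n + 1).factorial) := by
        positivity
      nlinarith
    exact hanti Set.self_mem_Ici hx hx
  · have hmono : MonotoneOn (W n) (Set.Iic 0) := by
      apply monotoneOn_of_deriv_nonneg (convex_Iic 0) hdiffable.continuous.continuousOn
        hdiffable.differentiableOn
      intro y hy
      rw [interior_Iic] at hy
      rw [hderiv y]
      have h1 : (0:ℝ) ≤ -(2 * y) := by nlinarith [Set.mem_Iio.mp hy]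
      have h2 : (0:ℝ) ≤ Real.exp (-y ^ 2) * (He (n + 1) y ^ 2 / (n + 1).factorial) := by
        positivity
      exact mul_nonneg h1 h2
    exact hmono hx Set.self_mem_Iic hx

lemma He_succ_succ_zero (n : ℕ) : He (n + 2) 0 = -(((n : ℝ) + 1) * He n 0) := by
  have := He_succ (n + 1) 0
  rw [derivative_hermite_succ] at this
  simpa [He] using this

lemma W_zero_le_one (n : ℕ) : W n 0 ≤ 1 := by
  induction n with
  | zero => simp [W, He_zero, He_one]
  | succ n ih =>
    have h0 : W (n + 1) 0 = He (n + 2) 0 ^ 2 / (n + 2).factorial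
        + He (n + 1) 0 ^ 2 / (n + 1).factorial := by
      simp [W]
    have h1 : W n 0 = He (n + 1) 0 ^ 2 / (n + 1).factorial + He n 0 ^ 2 / n.factorial := by
      simp [W]
    have hkey : He (n + 2) 0 ^ 2 / (n + 2).factorial ≤ He n 0 ^ 2 / n.factorial := by
      rw [He_succ_succ_zero]
      have hfac : (((n + 2).factorial : ℝ)) = ((n:ℝ) + 2) * (((n:ℝ) + 1) * n.factorial) := by
        push_cast [Nat.factorial_succ]; ring
      rw [hfac, div_le_div_iff₀ (by positivity) (by positivity)]
      have hf1 : (1:ℝ) ≤ n.factorial := by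
        exact_mod_cast Nat.one_le_iff_ne_zero.mpr n.factorial_ne_zero
      nlinarith [sq_nonneg (He n 0), show (0:ℝ) ≤ (n:ℝ) from Nat.cast_nonneg n, sq_nonneg (He n 0 * (n.factorial:ℝ))]
    calc W (n + 1) 0 ≤ He n 0 ^ 2 / n.factorial + He (n + 1) 0 ^ 2 / (n + 1).factorial := by
          rw [h0]; linarith
      _ = W n 0 := by rw [h1]; ring
      _ ≤ 1 := ih

lemma He_sq_le (n : ℕ) (x : ℝ) : He n x ^ 2 ≤ n.factorial * Real.exp (x ^ 2) := by
  cases n with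
  | zero =>
    simp only [He_zero, Nat.factorial_zero, Nat.cast_one, one_pow, one_mul]
    exact Real.one_le_exp (sq_nonneg x)
  | succ m =>
    have hW : W m x ≤ 1 := (W_le_W_zero m x).trans (W_zero_le_one m)
    have h2 : Real.exp (-x ^ 2) * (He (m + 1) x ^ 2 / (m + 1).factorial) ≤ 1 := by
      have hnn : 0 ≤ He m x ^ 2 / m.factorial := by positivity
      have := hW
      rw [W] at this
      nlinarith [Real.exp_pos (-x ^ 2)]
    have hpos : (0:ℝ) < (m + 1).factorial := by positivity
    have hexp : Real.exp (-x ^ 2) = (Real.exp (x ^ 2))⁻¹ := by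
      rw [← Real.exp_neg]
    rw [hexp] at h2
    rw [inv_mul_le_iff₀ (Real.exp_pos _), mul_one] at h2
    rw [div_le_iff₀ hpos] at h2
    calc He (m + 1) x ^ 2 ≤ Real.exp (x ^ 2) * (m + 1).factorial := h2
      _ = (m + 1).factorial * Real.exp (x ^ 2) := by ring


/-- The `ν`-th Hermite polynomial, normalized in `L²` of the standard Gaussian measure. -/
noncomputable def normHermite (ν : ℕ) (x : ℝ) : ℝ :=
  Polynomial.aeval x (Polynomial.hermite ν) / Real.sqrt (Nat.factorial ν)

lemma normHermite_sq_le (n : ℕ) (x : ℝ) : normHermite n x ^ 2 ≤ Real.exp (x ^ 2) := by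
  have h1 : normHermite n x ^ 2 = He n x ^ 2 / n.factorial := by
    rw [normHermite, div_pow, Real.sq_sqrt (Nat.cast_nonneg _)]
    rfl
  rw [h1, div_le_iff₀ (by positivity : (0:ℝ) < (n.factorial:ℝ))]
  calc He n x ^ 2 ≤ n.factorial * Real.exp (x ^ 2) := He_sq_le n x
    _ = Real.exp (x ^ 2) * n.factorial := by ring

/-- under (A1)–(A3) (indices shifted so that `α ν j = α_{ν+1,j+1}`),
every bounded sequence belongs to
`𝕏↑ = {x : Σ_{ν,j} γ_j α_{ν,1}⁻¹ h_ν(x_j)² < ∞}`, and the inclusion is strict. -/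
theorem linfty_subset_Xup_strict (α : ℕ → ℕ → ℝ)
    (hpos : ∀ ν j, 0 < α ν j) (hmono : ∀ ν j, α ν j ≤ α (ν + 1) j)
    (hA2 : Summable fun p : ℕ × ℕ => (α p.1 p.2)⁻¹)
    (hbdd : ∀ j, BddAbove (Set.range fun ν => α ν 0 / α ν j))
    (hA3 : Summable fun j => ⨆ ν, α ν 0 / α ν j) :
    {x : ℕ → ℝ | ∃ C : ℝ, ∀ j, |x j| ≤ C}
        ⊆ {x : ℕ → ℝ | Summable fun p : ℕ × ℕ =>
            (⨆ ν, α ν 0 / α ν p.2) * (α p.1 0)⁻¹ * (normHermite (p.1 + 1) (x p.2)) ^ 2}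
      ∧ {x : ℕ → ℝ | ∃ C : ℝ, ∀ j, |x j| ≤ C}
        ≠ {x : ℕ → ℝ | Summable fun p : ℕ × ℕ =>
            (⨆ ν, α ν 0 / α ν p.2) * (α p.1 0)⁻¹ * (normHermite (p.1 + 1) (x p.2)) ^ 2} := by
  set γ : ℕ → ℝ := fun j => ⨆ ν, α ν 0 / α ν j with hγdef
  have hγ0 : ∀ j, 0 ≤ γ j := fun j =>
    Real.iSup_nonneg fun ν => div_nonneg (hpos ν 0).le (hpos ν j).le
  have ha0 : ∀ ν, 0 ≤ (α ν 0)⁻¹ := fun ν => inv_nonneg.2 (hpos ν 0).le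
  have hSa : Summable fun ν => (α ν 0)⁻¹ := by
    have hinj : Function.Injective (fun ν : ℕ => ((ν, 0) : ℕ × ℕ)) := by
      intro a b h
      simpa using congrArg Prod.fst h
    exact hA2.comp_injective hinj
  -- key summability criterion
  have key : ∀ x : ℕ → ℝ, Summable (fun j => γ j * Real.exp ((x j) ^ 2)) →
      Summable fun p : ℕ × ℕ =>
        γ p.2 * (α p.1 0)⁻¹ * (normHermite (p.1 + 1) (x p.2)) ^ 2 := by
    intro x hs
    have hprod : Summable fun p : ℕ × ℕ => (α p.1 0)⁻¹ * (γ p.2 * Real.exp ((x p.2) ^ 2)) :=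
      hSa.mul_of_nonneg hs ha0 (fun j => mul_nonneg (hγ0 j) (Real.exp_pos _).le)
    refine Summable.of_nonneg_of_le (fun p => ?_) (fun p => ?_) hprod
    · exact mul_nonneg (mul_nonneg (hγ0 _) (ha0 _)) (sq_nonneg _)
    · calc γ p.2 * (α p.1 0)⁻¹ * (normHermite (p.1 + 1) (x p.2)) ^ 2
          ≤ γ p.2 * (α p.1 0)⁻¹ * Real.exp ((x p.2) ^ 2) :=
            mul_le_mul_of_nonneg_left (normHermite_sq_le _ _)
              (mul_nonneg (hγ0 _) (ha0 _))
        _ = (α p.1 0)⁻¹ * (γ p.2 * Real.exp ((x p.2) ^ 2)) := by ring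
  constructor
  · rintro x ⟨C, hC⟩
    simp only [Set.mem_setOf_eq]
    apply key
    refine Summable.of_nonneg_of_le (fun j => mul_nonneg (hγ0 j) (Real.exp_pos _).le)
      (fun j => ?_) (hA3.mul_right (Real.exp (C ^ 2)))
    have hx2 : (x j) ^ 2 ≤ C ^ 2 := by
      have h1 := hC j
      have h2 := abs_nonneg (x j)
      nlinarith [sq_abs (x j)]
    exact mul_le_mul_of_nonneg_left (Real.exp_le_exp.2 hx2) (hγ0 j)
  · -- strictness
    have hev : ∀ k : ℕ, ∀ᶠ j in atTop, γ j * Real.exp ((k : ℝ) ^ 2) ≤ (1 / 2 : ℝ) ^ k := by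
      intro k
      have hc : (0 : ℝ) < (1 / 2 : ℝ) ^ k * Real.exp (-(k : ℝ) ^ 2) := by positivity
      filter_upwards [hA3.tendsto_atTop_zero.eventually_le_const hc] with j hj
      have h2 : γ j * Real.exp ((k : ℝ) ^ 2)
          ≤ (1 / 2 : ℝ) ^ k * Real.exp (-(k : ℝ) ^ 2) * Real.exp ((k : ℝ) ^ 2) :=
        mul_le_mul_of_nonneg_right hj (Real.exp_pos _).le
      calc γ j * Real.exp ((k : ℝ) ^ 2)
          ≤ (1 / 2 : ℝ) ^ k * Real.exp (-(k : ℝ) ^ 2) * Real.exp ((k : ℝ) ^ 2) := h2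
        _ = (1 / 2 : ℝ) ^ k := by
            rw [mul_assoc, ← Real.exp_add]
            simp
    obtain ⟨φ, hφmono, hφ⟩ := Filter.extraction_forall_of_eventually hev
    set x : ℕ → ℝ := Function.extend φ (fun k => (k : ℝ)) (fun _ => 0) with hxdef
    have hxφ : ∀ k, x (φ k) = k := fun k => hφmono.injective.extend_apply _ _ k
    have hx0 : ∀ j ∉ Set.range φ, x j = 0 := by
      intro j hj
      exact Function.extend_apply' _ _ _ (by simpa [Set.mem_range] using hj)
    have hxnb : ¬ ∃ C : ℝ, ∀ j, |x j| ≤ C := by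
      rintro ⟨C, hC⟩
      have h1 := hC (φ (⌈C⌉₊ + 1))
      rw [hxφ] at h1
      have h2 : ((⌈C⌉₊ : ℝ) + 1) ≤ C := by
        have := le_abs_self ((⌈C⌉₊ + 1 : ℕ) : ℝ)
        push_cast at this h1 ⊢
        linarith
      have h3 := Nat.le_ceil C
      linarith
    have hδ : Summable (fun j => γ j * (Real.exp ((x j) ^ 2) - 1)) := by
      have hzero : ∀ j ∉ Set.range φ, γ j * (Real.exp ((x j) ^ 2) - 1) = 0 := by
        intro j hj
        rw [hx0 j hj]
        simp
      rw [← hφmono.injective.summable_iff hzero]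
      refine Summable.of_nonneg_of_le (fun k => ?_) (fun k => ?_) summable_geometric_two
      · have : (1 : ℝ) ≤ Real.exp ((x (φ k)) ^ 2) := Real.one_le_exp (sq_nonneg _)
        exact mul_nonneg (hγ0 _) (by linarith)
      · calc γ (φ k) * (Real.exp ((x (φ k)) ^ 2) - 1)
            ≤ γ (φ k) * Real.exp ((x (φ k)) ^ 2) :=
              mul_le_mul_of_nonneg_left (by linarith [Real.exp_pos ((x (φ k)) ^ 2)]) (hγ0 _)
          _ = γ (φ k) * Real.exp ((k : ℝ) ^ 2) := by rw [hxφ]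
          _ ≤ (1 / 2 : ℝ) ^ k := hφ k
    have hG : Summable (fun j => γ j * Real.exp ((x j) ^ 2)) := by
      have h := hA3.add hδ
      convert h using 2 with j
      ring
    have hmem : Summable fun p : ℕ × ℕ =>
        γ p.2 * (α p.1 0)⁻¹ * (normHermite (p.1 + 1) (x p.2)) ^ 2 := key x hG
    intro heq
    apply hxnb
    have : x ∈ {x : ℕ → ℝ | ∃ C : ℝ, ∀ j, |x j| ≤ C} := by
      rw [heq]
      exact hmem
    exact this
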